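/- Let Σ₁ denote the projective line of ℂ², with each ray written q = ℂ(r, c(r)e^{iθ}) for r ∈ [0,1], c(r) = √(1−r²), θ ∈ [0,2π) (with the conventions ℂ(1,0) and ℂ(0,1) for the poles). Define f by: f(ℂ(r, c(r)e^{iθ})) = ℂ(r², c(r²)e^{iθ}) if θ ∈ [0,π) and r ∉ {0,1}; f(ℂ(r, c(r)e^{iθ})) = ℂ(√(1−c(r)), (1−r²)^{1/4} e^{iθ}) if θ ∈ [π,2π) and r ∉ {0,1}; f(ℂ(1,0)) = ℂ(1,0); f(ℂ(0,1)) = ℂ(0,1). Then f is a bijection of Σ₁ satisfying: (i) f ≠ id; (ii) f⁻¹(p^⊥) = f(p)^⊥ for all p; (iii) f(p) ≠ p^⊥ for all p, where p^⊥ is the unique ray orthogonal to p. -/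

import Mathlib

open Set

/-- For a binary relation `R` on `α` and `a ⊆ α`, the set `a^⊥ = {q : q ⊥ p for all p ∈ a}`. -/
def pol {α : Type*} (R : α → α → Prop) (a : Set α) : Set α := {q | ∀ p ∈ a, R q p}

/-- An orthogonality relation: anti-reflexive, symmetric, singletons biorthogonally closed. -/
def IsOrthRel {α : Type*} (R : α → α → Prop) : Prop :=
  (∀ p, ¬ R p p) ∧ (∀ p q, R p q → R q p) ∧ ∀ p : α, pol R (pol R {p}) = {p}

/-- A p-lattice on `α`: contains `∅`, `univ`, all singletons, closed under arbitrary
intersections. -/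
def IsPLattice {α : Type*} (L : Set (Set α)) : Prop :=
  ∅ ∈ L ∧ Set.univ ∈ L ∧ (∀ S ⊆ L, ⋂₀ S ∈ L) ∧ ∀ p : α, {p} ∈ L

/-- The join (closure) of a subset `s` in a p-lattice `L`: the intersection of all members of
`L` containing `s`. -/
def cl {α : Type*} (L : Set (Set α)) (s : Set α) : Set α := ⋂₀ {c ∈ L | s ⊆ c}

/-- The separated-product relation `#` on `α × β`: `p # q ↔ p₁ ⊥₁ q₁ or p₂ ⊥₂ q₂`. -/
def sharp {α β : Type*} (R1 : α → α → Prop) (R2 : β → β → Prop) :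
    α × β → α × β → Prop := fun p q => R1 p.1 q.1 ∨ R2 p.2 q.2

noncomputable section

open Projectivization

/-- The projective line of `ℂ²`. -/
abbrev PC2 := Projectivization ℂ (EuclideanSpace ℂ (Fin 2))

/-- The usual orthogonality of rays in `ℂ²`. -/
def perp (p q : PC2) : Prop := (inner ℂ p.rep q.rep : ℂ) = 0

/-- `c(r) = √(1 - r²)`. -/
def cc (r : ℝ) : ℝ := Real.sqrt (1 - r ^ 2)

/-- The vector `(r, c(r)·e^{iθ})` of `ℂ²`. -/
def vec (r θ : ℝ) : EuclideanSpace ℂ (Fin 2) :=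
  (WithLp.equiv 2 (Fin 2 → ℂ)).symm ![(r : ℂ), (cc r : ℂ) * Complex.exp (θ * Complex.I)]

/-!
Write a ray as `ℂ(r, c(r)e^{iθ})` with `r ∈ [0,1]` and `θ ∈ [0,2π)`. The map `f` keeps `θ` and
replaces `r` by `F(r,θ)`, which is `r²` for `θ < π` and `√(1 - c(r))` for `θ ≥ π`; both branches
fix `0` and `1`. Away from the poles, `ℂ(s, c(s)e^{iφ})` and `ℂ(r, c(r)e^{iθ})` are orthogonal iff
`s² + r² = 1` and `|θ - φ| = π`. Antipodal angles lie in opposite branches, and there (ii) reads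
`1 - c(s) + r² = 1 ↔ s² + r⁴ = 1`, both sides saying `c(s) = r²`. As `f` keeps the angle, `f(p) ⊥ p`
could only happen at the poles, which `f` fixes: this is (iii). Finally, every ray has exactly one
orthogonal ray, and then (ii) alone forces `f` to be bijective, with inverse `p ↦ f(p^⊥)^⊥`.
-/

open Complex Projectivization Module
open scoped Real ComplexConjugate

lemma mem_pol_singleton {α : Type*} {R : α → α → Prop} {p q : α} :
    q ∈ pol R {p} ↔ R q p := by
  simp [pol]

theorem Function.bijective_of_preimage_pol_eq {α : Type*} {R : α → α → Prop}
    (hR : ∀ p q, R p q → R q p) (hR₁ : ∀ p, ∃! q, R p q) {f : α → α}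
    (hf : ∀ p, f ⁻¹' pol R {p} = pol R {f p}) : f.Bijective := by
  choose o ho ho_uniq using hR₁
  have hR_iff {p q : α} : R q p ↔ q = o p :=
    ⟨fun h => ho_uniq p q (hR q p h), fun h => hR _ _ (h ▸ ho p)⟩
  have o_o (p : α) : o (o p) = p := (hR_iff.mp (ho p)).symm
  have hfo (p q : α) : f q = o p ↔ q = o (f p) := by
    rw [← hR_iff, ← hR_iff, ← mem_pol_singleton (R := R), ← Set.mem_preimage, hf,
      mem_pol_singleton]
  refine (Function.bijective_iff_existsUnique f).mpr fun x => ?_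
  rw [← o_o x]
  simp only [hfo]
  exact existsUnique_eq

lemma ofReal_add_ofReal_mul_eq_zero_iff {a b : ℝ} (ha : 0 ≤ a) (hb : 0 ≤ b) {e : ℂ}
    (he : ‖e‖ = 1) : (a : ℂ) + b * e = 0 ↔ a = b ∧ (a = 0 ∨ e = -1) := by
  constructor
  · intro h
    have hab : a = b := by
      simpa [he, abs_of_nonneg ha, abs_of_nonneg hb, eq_comm] using
        congrArg norm (eq_neg_of_add_eq_zero_right h)
    subst hab
    refine ⟨rfl, ?_⟩
    have : (a : ℂ) * (1 + e) = 0 := by linear_combination h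
    simpa [add_eq_zero_iff_eq_neg'] using this
  · rintro ⟨rfl, rfl | rfl⟩ <;> simp

lemma exp_mul_I_eq_neg_one_iff {ψ : ℝ} (hψ : |ψ| < 2 * π) :
    exp (ψ * I) = -1 ↔ |ψ| = π := by
  constructor
  · intro h
    obtain ⟨k, hk⟩ := Real.cos_eq_neg_one_iff.mp (by simpa using congrArg re h)
    rw [abs_lt] at hψ
    have hk₁ : k < 1 := by
      have : (k : ℝ) < 1 := by nlinarith [Real.pi_pos]
      exact_mod_cast this
    have hk₂ : -2 < k := by
      have : (-2 : ℝ) < k := by nlinarith [Real.pi_pos]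
      exact_mod_cast this
    interval_cases k
    · rw [← hk]; norm_num [abs_of_neg, Real.pi_pos]; ring
    · rw [← hk]; norm_num [abs_of_pos, Real.pi_pos]
  · intro h
    rcases abs_eq Real.pi_pos.le |>.mp h with rfl | rfl
    · exact exp_pi_mul_I
    · simp [exp_neg]

lemma sq_add_sq_eq_one_and_mul_eq_zero_iff {s r : ℝ} (hs : 0 ≤ s) (hr : 0 ≤ r) :
    s ^ 2 + r ^ 2 = 1 ∧ s * r = 0 ↔ (s = 0 ∧ r = 1) ∨ (s = 1 ∧ r = 0) := by
  constructor
  · rintro ⟨h, h0⟩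
    rcases mul_eq_zero.mp h0 with rfl | rfl
    · exact .inl ⟨rfl, by nlinarith⟩
    · exact .inr ⟨by nlinarith, rfl⟩
  · rintro (⟨rfl, rfl⟩ | ⟨rfl, rfl⟩) <;> norm_num

namespace ProjectiveLine

lemma perp_mk {v w : EuclideanSpace ℂ (Fin 2)} (hv : v ≠ 0) (hw : w ≠ 0) :
    perp (mk ℂ v hv) (mk ℂ w hw) ↔ inner ℂ v w = 0 := by
  obtain ⟨a, ha⟩ := (mk_eq_mk_iff ℂ _ _ (rep_nonzero _) hv).mp (mk_rep (mk ℂ v hv))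
  obtain ⟨b, hb⟩ := (mk_eq_mk_iff ℂ _ _ (rep_nonzero _) hw).mp (mk_rep (mk ℂ w hw))
  rw [perp, ← ha, ← hb, Units.smul_def, Units.smul_def, inner_smul_left, inner_smul_right]
  simp [a.ne_zero, b.ne_zero]

lemma perp_symm {p q : PC2} : perp p q → perp q p :=
  inner_eq_zero_symm.mp

lemma existsUnique_perp (p : PC2) : ∃! q, perp p q := by
  induction p using Projectivization.ind with | h v hv => ?_
  have : Fact (finrank ℂ (EuclideanSpace ℂ (Fin 2)) = 2) := ⟨finrank_euclideanSpace_fin⟩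
  have hdim : finrank ℂ (ℂ ∙ v)ᗮ = 1 := Submodule.finrank_orthogonal_span_singleton hv
  obtain ⟨w, hwv, hw⟩ := Submodule.exists_mem_ne_zero_of_ne_bot (p := (ℂ ∙ v)ᗮ) <| by
    rintro h
    rw [h, finrank_bot] at hdim
    exact zero_ne_one hdim
  rw [Submodule.mem_orthogonal_singleton_iff_inner_right] at hwv
  refine ⟨mk ℂ w hw, (perp_mk hv hw).mpr hwv, fun q hq => ?_⟩
  induction q using Projectivization.ind with | h u hu => ?_
  rw [perp_mk] at hq
  obtain ⟨a, rfl⟩ := Submodule.mem_span_singleton.mp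
    (Submodule.mem_span_singleton_of_inner_eq_zero_of_inner_eq_zero hv hw hq hwv)
  exact (mk_eq_mk_iff' ℂ _ _ hu hw).mpr ⟨a, rfl⟩

lemma cc_nonneg (r : ℝ) : 0 ≤ cc r := Real.sqrt_nonneg _

lemma cc_le_one (r : ℝ) : cc r ≤ 1 := Real.sqrt_le_one.mpr (by nlinarith)

lemma cc_sq {r : ℝ} (hr : r ^ 2 ≤ 1) : cc r ^ 2 = 1 - r ^ 2 := Real.sq_sqrt (by linarith)

@[simp] lemma cc_zero : cc 0 = 1 := by simp [cc]

@[simp] lemma cc_one : cc 1 = 0 := by simp [cc]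

lemma mul_eq_cc_mul_cc_iff {s r : ℝ} (hs : s ∈ Icc (0 : ℝ) 1) (hr : r ∈ Icc (0 : ℝ) 1) :
    s * r = cc s * cc r ↔ s ^ 2 + r ^ 2 = 1 := by
  have hs2 : cc s ^ 2 = 1 - s ^ 2 := cc_sq (by nlinarith [hs.1, hs.2])
  have hr2 : cc r ^ 2 = 1 - r ^ 2 := cc_sq (by nlinarith [hr.1, hr.2])
  rw [← sq_eq_sq₀ (mul_nonneg hs.1 hr.1) (mul_nonneg (cc_nonneg s) (cc_nonneg r)), mul_pow,
    mul_pow, hs2, hr2]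
  constructor <;> intro h <;> nlinarith

lemma cc_sqrt_one_sub_cc {r : ℝ} (hr : r ^ 2 ≤ 1) :
    cc √(1 - cc r) = (1 - r ^ 2) ^ ((1 : ℝ) / 4) := by
  rw [cc, Real.sq_sqrt (by linarith [cc_le_one r]), sub_sub_cancel, cc, Real.sqrt_eq_rpow,
    Real.sqrt_eq_rpow, ← Real.rpow_mul (by linarith)]
  norm_num

@[simp] lemma vec_apply_zero (r θ : ℝ) : vec r θ 0 = r := by simp [vec]

@[simp] lemma vec_apply_one (r θ : ℝ) : vec r θ 1 = cc r * exp (θ * I) := by simp [vec]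

lemma vec_ne_zero (r θ : ℝ) : vec r θ ≠ 0 := by
  intro h
  have h0 := congrArg (· 0) h
  have h1 := congrArg (· 1) h
  simp only [vec_apply_zero, vec_apply_one, PiLp.zero_apply, ofReal_eq_zero] at h0 h1
  simp [h0, exp_ne_zero] at h1

lemma norm_sq_eq_apply_zero_add_apply_one (v : EuclideanSpace ℂ (Fin 2)) :
    ‖v‖ ^ 2 = ‖v 0‖ ^ 2 + ‖v 1‖ ^ 2 := by
  simp [EuclideanSpace.norm_sq_eq, Fin.sum_univ_two]

lemma norm_vec {r : ℝ} (hr : r ∈ Icc (0 : ℝ) 1) (θ : ℝ) : ‖vec r θ‖ = 1 := by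
  have : ‖vec r θ‖ ^ 2 = 1 := by
    rw [norm_sq_eq_apply_zero_add_apply_one, vec_apply_zero, vec_apply_one, norm_mul,
      norm_exp_ofReal_mul_I, mul_one, norm_real, norm_real, Real.norm_of_nonneg (cc_nonneg r),
      Real.norm_eq_abs, sq_abs, cc_sq (by nlinarith [hr.1, hr.2])]
    ring
  exact (pow_eq_one_iff_of_nonneg (norm_nonneg _) two_ne_zero).mp this

lemma inner_vec (s φ r θ : ℝ) :
    inner ℂ (vec s φ) (vec r θ) = (s * r : ℝ) + (cc s * cc r : ℝ) * exp ((θ - φ : ℝ) * I) := by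
  simp only [PiLp.inner_apply, Fin.sum_univ_two, vec_apply_zero, vec_apply_one,
    RCLike.inner_apply, map_mul, conj_ofReal, ← exp_conj, conj_I]
  push_cast
  rw [sub_mul, exp_sub, mul_neg, exp_neg]
  ring


def IsOrthCoords (s φ r θ : ℝ) : Prop :=
  (s = 0 ∧ r = 1) ∨ (s = 1 ∧ r = 0) ∨ (s ^ 2 + r ^ 2 = 1 ∧ |θ - φ| = π)

lemma perp_mk_vec_iff {s φ r θ : ℝ} (hs : s ∈ Icc (0 : ℝ) 1) (hr : r ∈ Icc (0 : ℝ) 1)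
    (hφ : φ ∈ Ico 0 (2 * π)) (hθ : θ ∈ Ico 0 (2 * π)) :
    perp (mk ℂ (vec s φ) (vec_ne_zero s φ)) (mk ℂ (vec r θ) (vec_ne_zero r θ)) ↔
      IsOrthCoords s φ r θ := by
  have hψ : |θ - φ| < 2 * π :=
    abs_sub_lt_iff.mpr ⟨by linarith [hθ.2, hφ.1], by linarith [hθ.1, hφ.2]⟩
  rw [perp_mk, inner_vec, ofReal_add_ofReal_mul_eq_zero_iff (mul_nonneg hs.1 hr.1)
    (mul_nonneg (cc_nonneg s) (cc_nonneg r)) (norm_exp_ofReal_mul_I _), mul_eq_cc_mul_cc_iff hs hr,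
    exp_mul_I_eq_neg_one_iff hψ, and_or_left, sq_add_sq_eq_one_and_mul_eq_zero_iff hs.1 hr.1,
    IsOrthCoords, or_assoc]

-- The parameters `(r, θ)` of a ray `ℂ(r, c(r)e^{iθ})` (see `mk_vec_radius_angle`); `θ` is the
-- argument of `v₁ v̄₀`, which does not change when `v` is rescaled.
def radius : PC2 → ℝ :=
  Projectivization.lift (fun v => ‖v.1 0‖ / ‖v.1‖)
    fun a b t h => by
      have ht : t ≠ 0 := by rintro rfl; exact a.2 (by simpa using h)
      simp only [h, PiLp.smul_apply, smul_eq_mul, norm_mul, norm_smul]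
      exact mul_div_mul_left _ _ (norm_ne_zero_iff.mpr ht)

def angle : PC2 → ℝ :=
  Projectivization.lift
    (fun v => toIcoMod Real.two_pi_pos 0 (arg (v.1 1 * conj (v.1 0))))
    fun a b t h => by
      have ht : t ≠ 0 := by rintro rfl; exact a.2 (by simpa using h)
      have : a.1 1 * conj (a.1 0) = (normSq t : ℝ) * (b.1 1 * conj (b.1 0)) := by
        rw [h, PiLp.smul_apply, PiLp.smul_apply, smul_eq_mul, smul_eq_mul, map_mul, ← mul_conj]
        ring
      simp only [this, arg_real_mul _ (normSq_pos.mpr ht)]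

lemma radius_mk {v : EuclideanSpace ℂ (Fin 2)} (hv : v ≠ 0) : radius (mk ℂ v hv) = ‖v 0‖ / ‖v‖ :=
  rfl

lemma angle_mk {v : EuclideanSpace ℂ (Fin 2)} (hv : v ≠ 0) :
    angle (mk ℂ v hv) = toIcoMod Real.two_pi_pos 0 (arg (v 1 * conj (v 0))) :=
  rfl

lemma radius_mem_Icc (p : PC2) : radius p ∈ Icc (0 : ℝ) 1 := by
  induction p using Projectivization.ind with | h v hv => ?_
  rw [radius_mk]
  exact ⟨by positivity, div_le_one_of_le₀ (PiLp.norm_apply_le v 0) (norm_nonneg v)⟩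

lemma angle_mem_Ico (p : PC2) : angle p ∈ Ico 0 (2 * π) := by
  induction p using Projectivization.ind with | h v hv => ?_
  simpa [angle_mk] using toIcoMod_mem_Ico' Real.two_pi_pos _

lemma radius_mk_vec {r : ℝ} (hr : r ∈ Icc (0 : ℝ) 1) (θ : ℝ) (hv : vec r θ ≠ 0) :
    radius (mk ℂ (vec r θ) hv) = r := by
  rw [radius_mk, norm_vec hr, vec_apply_zero, norm_real, Real.norm_of_nonneg hr.1, div_one]

lemma angle_mk_vec {r θ : ℝ} (hr : r ∈ Ioo (0 : ℝ) 1) (hθ : θ ∈ Ico 0 (2 * π))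
    (hv : vec r θ ≠ 0) : angle (mk ℂ (vec r θ) hv) = θ := by
  have hcc : 0 < cc r := Real.sqrt_pos.mpr (by nlinarith [hr.1, hr.2])
  have : vec r θ 1 * conj (vec r θ 0) = (r * cc r : ℝ) * exp (θ * I) := by
    rw [vec_apply_zero, vec_apply_one, conj_ofReal]; push_cast; ring
  rw [angle_mk, this, arg_real_mul _ (mul_pos hr.1 hcc), arg_exp_mul_I, toIcoMod_toIocMod,
    toIcoMod_eq_self]
  simpa using hθ

lemma cc_div_norm {v : EuclideanSpace ℂ (Fin 2)} (hv : v ≠ 0) :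
    cc (‖v 0‖ / ‖v‖) = ‖v 1‖ / ‖v‖ := by
  have hn : ‖v‖ ≠ 0 := norm_ne_zero_iff.mpr hv
  rw [cc, Real.sqrt_eq_iff_eq_sq _ (by positivity)]
  · field_simp
    linear_combination norm_sq_eq_apply_zero_add_apply_one v
  · rw [div_pow, sub_nonneg, div_le_one (by positivity), norm_sq_eq_apply_zero_add_apply_one]
    nlinarith [norm_nonneg (v 1)]

lemma mk_vec_radius_angle (p : PC2) : mk ℂ (vec (radius p) (angle p)) (vec_ne_zero _ _) = p := by
  induction p using Projectivization.ind with | h v hv => ?_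
  refine ((mk_eq_mk_iff' ℂ _ _ hv _).mpr ?_).symm
  have hexp : exp (angle (mk ℂ v hv) * I) = exp (arg (v 1 * conj (v 0)) * I) := by
    rw [angle_mk, toIcoMod, ofReal_sub, ofReal_zsmul, ofReal_mul, ofReal_ofNat]
    exact exp_mul_I_periodic.sub_zsmul_eq _
  have hn : (‖v‖ : ℂ) ≠ 0 := ofReal_ne_zero.mpr (norm_ne_zero_iff.mpr hv)
  rcases eq_or_ne (v 0) 0 with h0 | h0
  · refine ⟨v 1 / exp (angle (mk ℂ v hv) * I), ?_⟩
    ext i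
    fin_cases i
    · simp [radius_mk, h0]
    · simp [radius_mk, h0, exp_ne_zero]
  · have hn0 : (‖v 0‖ : ℂ) ≠ 0 := ofReal_ne_zero.mpr (norm_ne_zero_iff.mpr h0)
    have hz : (‖v 1‖ : ℂ) * ‖v 0‖ * exp (arg (v 1 * conj (v 0)) * I) = v 1 * conj (v 0) := by
      simpa [mul_comm] using norm_mul_exp_arg_mul_I (v 1 * conj (v 0))
    have hv0 : v 0 * conj (v 0) = (‖v 0‖ : ℂ) ^ 2 := by
      rw [mul_conj, normSq_eq_norm_sq]; push_cast; ring
    refine ⟨‖v‖ * v 0 / ‖v 0‖, ?_⟩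
    ext i
    fin_cases i
    · simp [radius_mk]
      field_simp
    · simp [radius_mk, cc_div_norm hv, hexp]
      field_simp
      apply mul_left_cancel₀ hn0
      linear_combination v 0 * hz + v 1 * hv0

def radiusMap (r θ : ℝ) : ℝ := if θ < π then r ^ 2 else √(1 - cc r)

lemma radiusMap_mem_Icc {r : ℝ} (hr : r ∈ Icc (0 : ℝ) 1) (θ : ℝ) :
    radiusMap r θ ∈ Icc (0 : ℝ) 1 := by
  unfold radiusMap
  split_ifs
  · exact ⟨by positivity, by nlinarith [hr.1, hr.2]⟩
  · exact ⟨Real.sqrt_nonneg _, Real.sqrt_le_one.mpr (by linarith [cc_nonneg r])⟩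

lemma radiusMap_eq_zero_iff {r : ℝ} (hr : r ∈ Icc (0 : ℝ) 1) (θ : ℝ) :
    radiusMap r θ = 0 ↔ r = 0 := by
  have hcc := cc_sq (r := r) (by nlinarith [hr.1, hr.2])
  unfold radiusMap
  split_ifs
  · exact pow_eq_zero_iff two_ne_zero
  · rw [Real.sqrt_eq_zero', sub_nonpos]
    constructor
    · intro h; nlinarith [cc_le_one r]
    · rintro rfl; simp

lemma radiusMap_eq_one_iff {r : ℝ} (hr : r ∈ Icc (0 : ℝ) 1) (θ : ℝ) :
    radiusMap r θ = 1 ↔ r = 1 := by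
  have hcc := cc_sq (r := r) (by nlinarith [hr.1, hr.2])
  unfold radiusMap
  split_ifs
  · exact pow_eq_one_iff_of_nonneg hr.1 two_ne_zero
  · rw [Real.sqrt_eq_one, sub_eq_self]
    constructor
    · intro h; nlinarith [hr.1]
    · rintro rfl; simp

lemma radiusMap_sq_add_sq_eq_one_iff {s φ r θ : ℝ} (hs : s ∈ Icc (0 : ℝ) 1) (hθ : θ < π)
    (hφ : π ≤ φ) : radiusMap s φ ^ 2 + r ^ 2 = 1 ↔ s ^ 2 + radiusMap r θ ^ 2 = 1 := by
  rw [radiusMap, if_neg hφ.not_gt, radiusMap, if_pos hθ, Real.sq_sqrt (by linarith [cc_le_one s])]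
  have key : cc s = r ^ 2 ↔ 1 - s ^ 2 = (r ^ 2) ^ 2 :=
    Real.sqrt_eq_iff_eq_sq (by nlinarith [hs.1, hs.2]) (sq_nonneg r)
  constructor <;> intro h
  · linarith [key.mp (by linarith)]
  · linarith [key.mpr (by linarith)]

lemma isOrthCoords_radiusMap_iff {s φ r θ : ℝ} (hs : s ∈ Icc (0 : ℝ) 1) (hr : r ∈ Icc (0 : ℝ) 1)
    (hφ : φ ∈ Ico 0 (2 * π)) (hθ : θ ∈ Ico 0 (2 * π)) :
    IsOrthCoords (radiusMap s φ) φ r θ ↔ IsOrthCoords s φ (radiusMap r θ) θ := by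
  unfold IsOrthCoords
  rw [radiusMap_eq_zero_iff hs, radiusMap_eq_one_iff hs, radiusMap_eq_zero_iff hr,
    radiusMap_eq_one_iff hr]
  refine or_congr_right (or_congr_right (and_congr_left fun hπ => ?_))
  -- antipodal angles lie in opposite halves of `[0, 2π)`
  rcases lt_or_ge θ π with hθπ | hθπ
  · have hφπ : π ≤ φ := by cases abs_cases (θ - φ) <;> linarith [hφ.1, hθ.1]
    exact radiusMap_sq_add_sq_eq_one_iff hs hθπ hφπ
  · have hφπ : φ < π := by cases abs_cases (θ - φ) <;> linarith [hθ.2, hφ.2]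
    rw [add_comm, add_comm (s ^ 2)]
    exact (radiusMap_sq_add_sq_eq_one_iff hr hφπ hθπ).symm

def radialMap (p : PC2) : PC2 :=
  mk ℂ (vec (radiusMap (radius p) (angle p)) (angle p)) (vec_ne_zero _ _)

lemma radialMap_eq_self {p : PC2} (hp : radius p = 0 ∨ radius p = 1) : radialMap p = p := by
  have hfix : radiusMap (radius p) (angle p) = radius p := by
    rcases hp with h | h
    · rw [h, radiusMap_eq_zero_iff (by simp) _]
    · rw [h, radiusMap_eq_one_iff (by simp) _]
  simp only [radialMap, hfix, mk_vec_radius_angle]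

lemma radialMap_mk_vec {r θ : ℝ} (hr : r ∈ Icc (0 : ℝ) 1) (hθ : θ ∈ Ico 0 (2 * π))
    (hv : vec r θ ≠ 0) :
    radialMap (mk ℂ (vec r θ) hv) = mk ℂ (vec (radiusMap r θ) θ) (vec_ne_zero _ _) := by
  rcases hr.1.eq_or_lt with rfl | hr₀
  · rw [radialMap_eq_self (.inl (radius_mk_vec hr θ hv))]
    simp only [(radiusMap_eq_zero_iff hr θ).mpr rfl]
  rcases hr.2.eq_or_lt with rfl | hr₁
  · rw [radialMap_eq_self (.inr (radius_mk_vec hr θ hv))]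
    simp only [(radiusMap_eq_one_iff hr θ).mpr rfl]
  simp only [radialMap, radius_mk_vec hr, angle_mk_vec ⟨hr₀, hr₁⟩ hθ]

lemma exists_mk_vec_eq (p : PC2) :
    ∃ r ∈ Icc (0 : ℝ) 1, ∃ θ ∈ Ico 0 (2 * π), mk ℂ (vec r θ) (vec_ne_zero r θ) = p :=
  ⟨_, radius_mem_Icc p, _, angle_mem_Ico p, mk_vec_radius_angle p⟩

lemma preimage_pol_radialMap (p : PC2) :
    radialMap ⁻¹' pol perp {p} = pol perp {radialMap p} := by
  ext q
  obtain ⟨r, hr, θ, hθ, rfl⟩ := exists_mk_vec_eq p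
  obtain ⟨s, hs, φ, hφ, rfl⟩ := exists_mk_vec_eq q
  rw [Set.mem_preimage, mem_pol_singleton, mem_pol_singleton, radialMap_mk_vec hs hφ,
    radialMap_mk_vec hr hθ, perp_mk_vec_iff (radiusMap_mem_Icc hs φ) hr hφ hθ,
    perp_mk_vec_iff hs (radiusMap_mem_Icc hr θ) hφ hθ]
  exact isOrthCoords_radiusMap_iff hs hr hφ hθ

lemma not_perp_radialMap (p : PC2) : ¬ perp p (radialMap p) := by
  obtain ⟨r, hr, θ, hθ, rfl⟩ := exists_mk_vec_eq p
  rw [radialMap_mk_vec hr hθ, perp_mk_vec_iff hr (radiusMap_mem_Icc hr θ) hθ hθ, IsOrthCoords,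
    radiusMap_eq_zero_iff hr, radiusMap_eq_one_iff hr, sub_self, abs_zero]
  rintro (⟨rfl, h⟩ | ⟨rfl, h⟩ | ⟨-, h⟩)
  · exact zero_ne_one h
  · exact one_ne_zero h
  · exact Real.pi_ne_zero h.symm

lemma radialMap_ne_id : radialMap ≠ id := by
  intro h
  have hv := vec_ne_zero (1 / 2) 0
  have := congrArg radius (congrFun h (mk ℂ (vec (1 / 2) 0) hv))
  rw [radialMap_mk_vec (by norm_num) (by simp [Real.pi_pos]), id,
    radius_mk_vec (radiusMap_mem_Icc (by norm_num) 0), radius_mk_vec (by norm_num), radiusMap,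
    if_pos Real.pi_pos] at this
  norm_num at this

end ProjectiveLine

open ProjectiveLine

/-- the explicitly defined map `f` on the projective line of `ℂ²` is a
bijection satisfying (i) `f ≠ id`, (ii) `f⁻¹(p^⊥) = f(p)^⊥`, (iii) `f(p) ≠ p^⊥`
(equivalently, `f p` is never orthogonal to `p`). -/
theorem stmt17 : ∃ f : PC2 → PC2,
    Function.Bijective f ∧
    -- first branch: `θ ∈ [0,π)`, `r ∉ {0,1}`
    (∀ (r θ : ℝ) (_ : 0 < r) (_ : r < 1) (_ : 0 ≤ θ) (_ : θ < Real.pi)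
        (hv : vec r θ ≠ 0) (hv' : vec (r ^ 2) θ ≠ 0),
      f (Projectivization.mk ℂ (vec r θ) hv) = Projectivization.mk ℂ (vec (r ^ 2) θ) hv') ∧
    -- second branch: `θ ∈ [π,2π)`, `r ∉ {0,1}`;
    -- note `ℂ(√(1-c r), (1-r²)^{1/4}e^{iθ}) = ℂ(√(1-c r), c(√(1-c r))e^{iθ})`
    (∀ (r θ : ℝ) (_ : 0 < r) (_ : r < 1) (_ : Real.pi ≤ θ) (_ : θ < 2 * Real.pi)
        (hv : vec r θ ≠ 0)
        (hv' : ((WithLp.equiv 2 (Fin 2 → ℂ)).symm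
          ![(Real.sqrt (1 - cc r) : ℂ),
            (((1 - r ^ 2) ^ ((1 : ℝ) / 4) : ℝ) : ℂ) * Complex.exp (θ * Complex.I)] :
              EuclideanSpace ℂ (Fin 2)) ≠ 0),
      f (Projectivization.mk ℂ (vec r θ) hv) =
        Projectivization.mk ℂ ((WithLp.equiv 2 (Fin 2 → ℂ)).symm
          ![(Real.sqrt (1 - cc r) : ℂ),
            (((1 - r ^ 2) ^ ((1 : ℝ) / 4) : ℝ) : ℂ) * Complex.exp (θ * Complex.I)]) hv') ∧
    -- the poles `ℂ(1,0)` and `ℂ(0,1)` are fixed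
    (∀ hv : vec 1 0 ≠ 0,
      f (Projectivization.mk ℂ (vec 1 0) hv) = Projectivization.mk ℂ (vec 1 0) hv) ∧
    (∀ hv : vec 0 0 ≠ 0,
      f (Projectivization.mk ℂ (vec 0 0) hv) = Projectivization.mk ℂ (vec 0 0) hv) ∧
    -- (i)
    f ≠ id ∧
    -- (ii)
    (∀ p : PC2, f ⁻¹' (pol perp {p}) = pol perp {f p}) ∧
    -- (iii)
    (∀ p : PC2, ¬ perp p (f p)) := by
  refine ⟨radialMap, Function.bijective_of_preimage_pol_eq (fun _ _ => perp_symm)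
    existsUnique_perp preimage_pol_radialMap, ?_, ?_, ?_, ?_, radialMap_ne_id,
    preimage_pol_radialMap, not_perp_radialMap⟩
  · intro r θ hr₀ hr₁ hθ₀ hθ₁ hv hv'
    rw [radialMap_mk_vec ⟨hr₀.le, hr₁.le⟩ ⟨hθ₀, by linarith⟩]
    simp only [radiusMap, if_pos hθ₁]
  · intro r θ hr₀ hr₁ hθ₀ hθ₁ hv hv'
    rw [radialMap_mk_vec ⟨hr₀.le, hr₁.le⟩ ⟨by linarith [Real.pi_pos], hθ₁⟩]
    simp only [radiusMap, if_neg hθ₀.not_gt]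
    congr 1
    ext i
    fin_cases i <;> simp [cc_sqrt_one_sub_cc (r := r) (by nlinarith)]
  · intro hv
    exact radialMap_eq_self (.inr (radius_mk_vec (by simp) 0 hv))
  · intro hv
    exact radialMap_eq_self (.inl (radius_mk_vec (by simp) 0 hv))

end
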